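/- Let G be a finite group of odd order acting linearly on a finite-dimensional real vector space V via a representation ρ : G → GL(V), and let V^G = {v ∈ V | ρ(g)v = v for all g ∈ G} denote the subspace of fixed vectors. Then the codimension dim V − dim V^G is an even number. -/

import Mathlib

/-!
Averaging the character `χ` of `ρ` gives `|G| · dim V^G = ∑ g, χ g = dim V + 2 ∑ g ∈ T, χ g`,
where `T` holds one element of each pair `{g, g⁻¹}` with `g ≠ 1`: such pairs exhaust `G \ {1}`
because `|G|` is odd, and `χ g⁻¹ = χ g` because `ρ` preserves an averaged inner product.
Each `χ g` is a sum of roots of unity, so `(|G| · dim V^G - dim V) / 2` is a rational algebraic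
integer, hence an integer; since `|G|` is odd, `dim V - dim V^G` is even.
-/

open Matrix in
theorem Matrix.trace_map_inv_eq_star_trace {G K m : Type*} [Group G] [Fintype G]
    [Field K] [PartialOrder K] [StarRing K] [StarOrderedRing K] [Fintype m] [DecidableEq m]
    (A : G →* Matrix m m K) (g : G) : (A g⁻¹).trace = star (A g).trace := by
  -- `Q` is a `G`-invariant positive definite form, so `A g⁻¹` is the `Q`-adjoint of `A g`.
  set Q := ∑ h : G, (A h)ᴴ * A h
  have hQ : IsUnit Q.det := (isUnit_iff_isUnit_det Q).1 <| PosDef.isUnit <|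
    posDef_sum Finset.univ_nonempty fun h _ ↦
      .conjTranspose_mul_self _ (mulVec_injective_iff_isUnit.2 ((Group.isUnit h).map A))
  have hQ_invariant : (A g)ᴴ * Q * A g = Q := by
    simp only [Q, Finset.mul_sum, Finset.sum_mul]
    exact Fintype.sum_equiv (Equiv.mulRight g) _ _ fun h ↦ by
      simp [conjTranspose_mul, Matrix.mul_assoc]
  have hconj : Q * A g⁻¹ = (A g)ᴴ * Q := by
    conv_lhs => rw [← hQ_invariant]
    rw [Matrix.mul_assoc, ← map_mul, mul_inv_cancel, map_one, Matrix.mul_one]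
  calc (A g⁻¹).trace = (Q⁻¹ * (Q * A g⁻¹)).trace := by
        rw [← Matrix.mul_assoc, nonsing_inv_mul Q hQ, Matrix.one_mul]
    _ = ((A g)ᴴ * (Q * Q⁻¹)).trace := by rw [hconj, trace_mul_comm, Matrix.mul_assoc]
    _ = star (A g).trace := by
        rw [mul_nonsing_inv Q hQ, Matrix.mul_one, trace_conjTranspose]

theorem Representation.char_inv {G k V : Type*} [Group G] [Fintype G] [Field k] [PartialOrder k]
    [StarRing k] [StarOrderedRing k] [AddCommGroup V] [Module k V] [FiniteDimensional k V]
    (ρ : Representation k G V) (g : G) : ρ.character g⁻¹ = star (ρ.character g) := by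
  let b := Module.finBasis k V
  simp only [Representation.character, LinearMap.trace_eq_matrix_trace k b]
  exact Matrix.trace_map_inv_eq_star_trace ((LinearMap.toMatrixAlgEquiv b).toMonoidHom.comp ρ) g

theorem Module.End.isIntegral_trace_of_pow_eq_one {K V : Type*} [Field K] [AddCommGroup V]
    [Module K V] [FiniteDimensional K V] {f : Module.End K V} {n : ℕ} (hn : n ≠ 0)
    (hf : f ^ n = 1) : IsIntegral ℤ (LinearMap.trace K V f) := by
  let L := AlgebraicClosure K
  let fL := f.baseChange L
  have hfL : fL ^ n = 1 := by
    rw [← LinearMap.baseChange_pow, hf, LinearMap.baseChange_one]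
  have hroot : ∀ μ ∈ fL.charpoly.roots, μ ^ n = 1 := fun μ hμ ↦ by
    obtain ⟨v, hv⟩ := ((Module.End.hasEigenvalue_iff_isRoot_charpoly fL μ).2
      (Polynomial.isRoot_of_mem_roots hμ)).exists_hasEigenvector
    have h := hv.pow_apply n
    rw [hfL, Module.End.one_apply, ← one_smul L v, smul_smul, mul_one] at h
    exact smul_left_injective L hv.2 h.symm
  rw [← isIntegral_algebraMap_iff (algebraMap K L).injective, ← LinearMap.trace_baseChange,
    Module.End.trace_eq_sum_roots_charpoly_of_splits (IsAlgClosed.splits _)]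
  exact IsIntegral.multiset_sum fun μ hμ ↦
    .of_pow (Nat.pos_of_ne_zero hn) (hroot μ hμ ▸ isIntegral_one)

theorem eq_one_of_inv_eq_self_of_odd_card {G : Type*} [Group G] (hG : Odd (Nat.card G)) {g : G}
    (h : g⁻¹ = g) : g = 1 :=
  (powCoprime (n := 2) (Nat.coprime_two_right.2 hG)).injective <| by
    simp [powCoprime, sq, ← inv_eq_iff_mul_eq_one.1 h]

theorem exists_sum_eq_add_two_nsmul_of_odd_card {G M : Type*} [Group G] [Fintype G]
    [AddCommMonoid M] (hG : Odd (Nat.card G)) (f : G → M) (hf : ∀ g, f g⁻¹ = f g) :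
    ∃ t : Finset G, ∑ g, f g = f 1 + 2 • ∑ g ∈ t, f g := by
  classical
  -- A linear order picks one element `g < g⁻¹` out of each pair `{g, g⁻¹}`.
  let _ : LinearOrder G := LinearOrder.lift' (Fintype.equivFin G) (Fintype.equivFin G).injective
  have hsplit (g : G) : f g = (if g = 1 then f 1 else 0) +
      ((if g < g⁻¹ then f g else 0) + if g⁻¹ < g then f g else 0) := by
    by_cases h1 : g = 1
    · simp [h1]
    rcases lt_trichotomy g g⁻¹ with h | h | h
    · simp [h1, h, h.not_gt]
    · exact absurd (eq_one_of_inv_eq_self_of_odd_card hG h.symm) h1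
    · simp [h1, h, h.not_gt]
  have hswap : ∑ g : G, (if g⁻¹ < g then f g else 0) = ∑ g : G, if g < g⁻¹ then f g else 0 :=
    Fintype.sum_equiv (Equiv.inv G) _ _ fun g ↦ by simp [hf]
  refine ⟨Finset.univ.filter fun g ↦ g < g⁻¹, ?_⟩
  rw [Finset.sum_congr rfl fun g _ ↦ hsplit g, Finset.sum_add_distrib, Finset.sum_add_distrib,
    hswap, Finset.sum_ite_eq', if_pos (Finset.mem_univ _), Finset.sum_filter, two_nsmul]

theorem Representation.isIntegral_character {G k V : Type*} [Group G] [Finite G] [Field k]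
    [AddCommGroup V] [Module k V] [FiniteDimensional k V] (ρ : Representation k G V) (g : G) :
    IsIntegral ℤ (ρ.character g) :=
  Module.End.isIntegral_trace_of_pow_eq_one Nat.card_pos.ne' <| by
    rw [← map_pow, pow_card_eq_one', map_one]

theorem Int.even_of_isIntegral_div_two {K : Type*} [Field K] [CharZero K] {k : ℤ}
    (h : IsIntegral ℤ ((k : K) / 2)) : Even k := by
  rw [show (k : K) / 2 = algebraMap ℚ K (k / 2) by simp,
    isIntegral_algebraMap_iff (algebraMap ℚ K).injective,
    IsIntegrallyClosed.isIntegral_iff] at h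
  obtain ⟨y, hy⟩ := h
  rw [eq_div_iff two_ne_zero, eq_intCast] at hy
  exact ⟨y, by exact_mod_cast (hy.symm.trans (mul_two _))⟩

theorem Representation.even_card_mul_finrank_invariants_sub_finrank {G V : Type*} [Group G]
    [Fintype G] [AddCommGroup V] [Module ℝ V] [FiniteDimensional ℝ V] (hG : Odd (Nat.card G))
    (ρ : Representation ℝ G V) :
    Even (Nat.card G * Module.finrank ℝ ρ.invariants - Module.finrank ℝ V : ℤ) := by
  obtain ⟨t, ht⟩ := exists_sum_eq_add_two_nsmul_of_odd_card hG ρ.character fun g ↦ by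
    rw [ρ.char_inv, star_trivial]
  have hcard : (Nat.card G : ℝ) ≠ 0 := Nat.cast_ne_zero.2 Nat.card_pos.ne'
  let _ : Invertible (Nat.card G : ℝ) := invertibleOfNonzero hcard
  have havg := ρ.card_inv_mul_sum_char_eq_finrank
  rw [ht, ρ.char_one, inv_mul_eq_iff_eq_mul₀ hcard, two_nsmul] at havg
  have hhalf : ((Nat.card G * Module.finrank ℝ ρ.invariants - Module.finrank ℝ V : ℤ) : ℝ) / 2 =
      ∑ g ∈ t, ρ.character g := by
    push_cast
    linarith
  refine Int.even_of_isIntegral_div_two (K := ℝ) ?_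
  rw [hhalf]
  exact IsIntegral.sum _ fun g _ ↦ ρ.isIntegral_character g

/-- The fixed-point subspace of a linear action of a finite group of odd order
on a finite-dimensional real vector space has even codimension. -/
theorem odd_order_rep_fixed_subspace_even_codim
    {G : Type*} [Group G] [Fintype G] (hG : Odd (Fintype.card G))
    {V : Type*} [AddCommGroup V] [Module ℝ V] [FiniteDimensional ℝ V]
    (ρ : Representation ℝ G V) :
    Even (Module.finrank ℝ V - Module.finrank ℝ ρ.invariants) := by
  rw [← Nat.card_eq_fintype_card] at hG
  have hcodim := ρ.even_card_mul_finrank_invariants_sub_finrank hG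
  rw [← Int.even_coe_nat, Nat.cast_sub (Submodule.finrank_le _), Int.even_sub]
  rw [Int.even_sub, Int.even_mul] at hcodim
  have : ¬ Even (Nat.card G : ℤ) := by exact_mod_cast Nat.not_even_iff_odd.2 hG
  tauto
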